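/- arXiv:1112.5761 — 6 statements merged into one kernel-verified Lean document; each statement's English description precedes it below -/
import Mathlib

section
/- Let {Θ_i}_{i∈I} be a family of sets of partial functions from X to V such that each Θ_i is lub closed. Then the family lub ⊔{Θ_i | i ∈ I} is lub closed, and ∪{Θ_i | i ∈ I} ⊆ ⊔{Θ_i | i ∈ I}. -/
/- Partial functions X ⇀ V are modeled as functions `X → Option V`. -/

variable {X V E : Type*}

/-- `θ` is less informative than `θ'` (θ ⊑ θ'): wherever `θ` is defined, `θ'` is
defined with the same value. -/
def PFle (θ θ' : X → Option V) : Prop :=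
  ∀ x v, θ x = some v → θ' x = some v

/-- The everywhere-undefined partial function ⊥. -/
def pbot : X → Option V := fun _ => none

/-- `θ'` is an upper bound of the set `Θ` of partial functions. -/
def IsUB (Θ : Set (X → Option V)) (θ' : X → Option V) : Prop :=
  ∀ θ ∈ Θ, PFle θ θ'

/-- `θ'` is the least upper bound (⊔Θ) of the set `Θ` of partial functions. -/
def IsLubPF (Θ : Set (X → Option V)) (θ' : X → Option V) : Prop :=
  IsUB Θ θ' ∧ ∀ θ'', IsUB Θ θ'' → PFle θ' θ''

/-- Θ is lub closed: every subset of Θ admitting an upper bound has its lub in Θ. -/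
def LubClosed (Θ : Set (X → Option V)) : Prop :=
  ∀ Θ' ⊆ Θ, ∀ u, IsLubPF Θ' u → u ∈ Θ

/-- The family lub ⊔{Θ_i | i ∈ I}. -/
def famLub {I : Type*} (Θ : I → Set (X → Option V)) : Set (X → Option V) :=
  {θ | ∃ f : I → (X → Option V), (∀ i, f i ∈ Θ i) ∧ IsLubPF (Set.range f) θ}

/-!
A set of partial functions with an upper bound has a lub, namely the union of its members, so
lubs of bounded sets always exist, and a lub closed set contains `⊥ = ⊔∅`. Given a bounded
`S ⊆ ⊔{Θ_i}`, pick for each `θ ∈ S` a family `(g θ i)_i` with `θ = ⊔_i g θ i`; then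
`f i := ⊔_θ g θ i` lies in `Θ_i`, and `⊔S = ⊔_i f i` because both are the lub of all the `g θ i`.
Each `θ ∈ Θ_i` is the lub of the family that is `θ` at `i` and `⊥` elsewhere.
-/

theorem PFle.refl (θ : X → Option V) : PFle θ θ :=
  fun _ _ hv => hv

theorem PFle.trans {θ₁ θ₂ θ₃ : X → Option V} (h₁₂ : PFle θ₁ θ₂) (h₂₃ : PFle θ₂ θ₃) :
    PFle θ₁ θ₃ :=
  fun x v hv => h₂₃ x v (h₁₂ x v hv)

theorem pbot_le (θ : X → Option V) : PFle pbot θ := by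
  intro x v hv
  simp [pbot] at hv

theorem isLubPF_empty : IsLubPF (∅ : Set (X → Option V)) pbot :=
  ⟨fun _ h => h.elim, fun θ _ => pbot_le θ⟩

theorem LubClosed.pbot_mem {Θ : Set (X → Option V)} (h : LubClosed Θ) : pbot ∈ Θ :=
  h ∅ (Set.empty_subset Θ) pbot isLubPF_empty

theorem isLubPF_of_mem_of_isUB {Θ : Set (X → Option V)} {θ : X → Option V} (hmem : θ ∈ Θ)
    (hub : IsUB Θ θ) : IsLubPF Θ θ :=
  ⟨hub, fun _ hw => hw θ hmem⟩

theorem isLubPF_congr {A B : Set (X → Option V)} (h : ∀ w, IsUB A w ↔ IsUB B w)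
    {θ : X → Option V} : IsLubPF A θ ↔ IsLubPF B θ := by
  simp only [IsLubPF, h]

theorem exists_isLubPF_of_isUB {Θ : Set (X → Option V)} {b : X → Option V} (hb : IsUB Θ b) :
    ∃ u, IsLubPF Θ u := by
  classical
  refine ⟨fun x => if ∃ θ ∈ Θ, θ x ≠ none then b x else none, ?_, ?_⟩
  · intro θ hθ x v hv
    simp only [if_pos (⟨θ, hθ, by simp [hv]⟩ : ∃ θ ∈ Θ, θ x ≠ none)]
    exact hb θ hθ x v hv
  · intro w hw x v hv
    by_cases hdef : ∃ θ ∈ Θ, θ x ≠ none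
    · obtain ⟨θ, hθ, hθx⟩ := hdef
      obtain ⟨v', hv'⟩ := Option.ne_none_iff_exists'.mp hθx
      simp only [if_pos (⟨θ, hθ, hθx⟩ : ∃ θ ∈ Θ, θ x ≠ none), hb θ hθ x v' hv',
        Option.some.injEq] at hv
      exact hv ▸ hw θ hθ x v' hv'
    · simp [if_neg hdef] at hv

theorem isUB_range_iff_of_isLubPF {J I : Type*} {g : J → I → X → Option V}
    {s : J → X → Option V} (hs : ∀ j, IsLubPF (Set.range (g j)) (s j)) (w : X → Option V) :
    IsUB (Set.range s) w ↔ ∀ j i, PFle (g j i) w := by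
  constructor
  · intro hw j i
    exact ((hs j).1 _ ⟨i, rfl⟩).trans (hw _ ⟨j, rfl⟩)
  · rintro hw _ ⟨j, rfl⟩
    exact (hs j).2 w (by rintro _ ⟨i, rfl⟩; exact hw j i)

theorem lubClosed_famLub {I : Type*} {Θ : I → Set (X → Option V)} (h : ∀ i, LubClosed (Θ i)) :
    LubClosed (famLub Θ) := by
  intro S hS u hu
  choose g hgΘ hg using fun θ : S => hS θ.2
  have hSrange : IsLubPF (Set.range ((↑) : S → X → Option V)) u := by
    rwa [Subtype.range_coe]
  have hgu : ∀ θ i, PFle (g θ i) u :=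
    (isUB_range_iff_of_isLubPF hg u).mp hSrange.1
  have hbounded : ∀ i, IsUB (Set.range fun θ : S => g θ i) u := by
    rintro i _ ⟨θ, rfl⟩
    exact hgu θ i
  choose f hf using fun i => exists_isLubPF_of_isUB (hbounded i)
  refine ⟨f, fun i => h i _ ?_ (f i) (hf i), ?_⟩
  · rintro _ ⟨θ, rfl⟩
    exact hgΘ θ i
  · refine (isLubPF_congr fun w => ?_).mpr hSrange
    rw [isUB_range_iff_of_isLubPF hf, isUB_range_iff_of_isLubPF hg, forall_comm]

theorem iUnion_subset_famLub {I : Type*} {Θ : I → Set (X → Option V)} (hbot : ∀ i, pbot ∈ Θ i) :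
    (⋃ i, Θ i) ⊆ famLub Θ := by
  classical
  intro θ hθ
  obtain ⟨i, hi⟩ := Set.mem_iUnion.mp hθ
  refine ⟨Function.update (fun _ => pbot) i θ, fun j => ?_, ?_⟩
  · rcases eq_or_ne j i with rfl | hj
    · simpa using hi
    · simpa [hj] using hbot j
  · refine isLubPF_of_mem_of_isUB ⟨i, by simp⟩ ?_
    rintro _ ⟨j, rfl⟩
    rcases eq_or_ne j i with rfl | hj
    · simpa using PFle.refl θ
    · simpa [hj] using pbot_le θ

/-- If each Θ_i is lub closed, then ⊔{Θ_i | i ∈ I} is lub closed and it includes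
∪{Θ_i | i ∈ I}. -/
theorem stmt5 {I : Type*} (Θ : I → Set (X → Option V))
    (h : ∀ i, LubClosed (Θ i)) :
    LubClosed (famLub Θ) ∧ (⋃ i, Θ i) ⊆ famLub Θ :=
  ⟨lubClosed_famLub h, iUnion_subset_famLub fun i => (h i).pbot_mem⟩
end

section
/- Let Θ be a lub closed set of partial functions from X to V and let θ' : X ⇀ V. Then (θ']_Θ = {θ ∈ Θ : θ ⊑ θ'} is lub closed, and (θ']_Θ has a maximum, i.e., there is an element max (θ']_Θ of (θ']_Θ with θ ⊑ max (θ']_Θ for every θ ∈ (θ']_Θ. -/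
/- Partial functions X ⇀ V are modeled as functions `X → Option V`. -/

variable {X V E : Type*}

/-- (θ']_Θ : the elements of Θ that are less informative than θ'. -/
def below (θ' : X → Option V) (Θ : Set (X → Option V)) : Set (X → Option V) :=
  {θ ∈ Θ | PFle θ θ'}

theorem LubClosed.below {Θ : Set (X → Option V)} (hΘ : LubClosed Θ) (θ' : X → Option V) :
    LubClosed (below θ' Θ) :=
  fun _ hsub u hu =>
    ⟨hΘ _ (fun _ hθ => (hsub hθ).1) u hu, hu.2 θ' fun _ hθ => (hsub hθ).2⟩

/- The lub of a bounded set `Θ` with upper bound `u` is `u` restricted to the points where some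
member of `Θ` is defined, since every member agrees with `u` wherever it is defined. -/
theorem IsUB.exists_isLubPF {Θ : Set (X → Option V)} {u : X → Option V} (hu : IsUB Θ u) :
    ∃ m, IsLubPF Θ m := by
  classical
  refine ⟨fun x => if ∃ θ ∈ Θ, (θ x).isSome then u x else none, ?_, ?_⟩
  · intro θ hθ x v hx
    dsimp only
    rw [if_pos ⟨θ, hθ, by simp [hx]⟩]
    exact hu θ hθ x v hx
  · intro w hw x v hx
    dsimp only at hx
    split_ifs at hx with hdef
    obtain ⟨θ, hθ, hsome⟩ := hdef
    obtain ⟨v', hv'⟩ := Option.isSome_iff_exists.mp hsome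
    rw [hu θ hθ x v' hv', Option.some_inj] at hx
    exact hx ▸ hw θ hθ x v' hv'

theorem LubClosed.exists_isUB_mem {Θ : Set (X → Option V)} (hΘ : LubClosed Θ)
    {u : X → Option V} (hu : IsUB Θ u) : ∃ m ∈ Θ, IsUB Θ m :=
  let ⟨m, hm⟩ := hu.exists_isLubPF
  ⟨m, hΘ Θ subset_rfl m hm, hm.1⟩

/-- If Θ is lub closed then (θ']_Θ is lub closed and has a maximum. -/
theorem stmt8 (Θ : Set (X → Option V)) (hΘ : LubClosed Θ) (θ' : X → Option V) :
    LubClosed (below θ' Θ) ∧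
    ∃ m ∈ below θ' Θ, ∀ θ ∈ below θ' Θ, PFle θ m :=
  ⟨hΘ.below θ', (hΘ.below θ').exists_isUB_mem fun _ hθ => hθ.2⟩
end

section
/- Let Θ be a lub closed set of partial functions from X to V and let θ : X ⇀ V. If θ1, θ2 ∈ {θ} ⊔ Θ are such that θ1 = max (θ2]_Θ, then θ1 = θ2. -/
/- Partial functions X ⇀ V are modeled as functions `X → Option V`. -/

variable {X V E : Type*}

/-- {θ} ⊔ Θ : the set of all existing lubs θ ⊔ θ'' with θ'' ∈ Θ. -/
def joinOne (θ : X → Option V) (Θ : Set (X → Option V)) : Set (X → Option V) :=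
  {θ' | ∃ θ'' ∈ Θ, IsLubPF {θ, θ''} θ'}

theorem PFle.antisymm {θ θ' : X → Option V} (h : PFle θ θ') (h' : PFle θ' θ) : θ = θ' :=
  funext fun x => Option.ext fun v => ⟨h x v, h' x v⟩

theorem isUB_pair_iff {a b u : X → Option V} : IsUB {a, b} u ↔ PFle a u ∧ PFle b u := by
  simp [IsUB]

namespace IsLubPF

variable {a b u : X → Option V}

theorem le_left (h : IsLubPF {a, b} u) : PFle a u := (isUB_pair_iff.1 h.1).1

theorem le_right (h : IsLubPF {a, b} u) : PFle b u := (isUB_pair_iff.1 h.1).2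

theorem le_of_le {w : X → Option V} (h : IsLubPF {a, b} u) (ha : PFle a w) (hb : PFle b w) :
    PFle u w :=
  h.2 w (isUB_pair_iff.2 ⟨ha, hb⟩)

end IsLubPF

theorem stmt10_general (Θ : Set (X → Option V))
    (θ θ₁ θ₂ : X → Option V)
    (h₁ : θ₁ ∈ joinOne θ Θ) (h₂ : θ₂ ∈ joinOne θ Θ)
    (hmem : θ₁ ∈ below θ₂ Θ) (hmax : ∀ q ∈ below θ₂ Θ, PFle q θ₁) :
    θ₁ = θ₂ := by
  obtain ⟨_, -, hθ₁⟩ := h₁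
  obtain ⟨b, hb, hθ₂⟩ := h₂
  have hb₁ : PFle b θ₁ := hmax b ⟨hb, hθ₂.le_right⟩
  exact PFle.antisymm hmem.2 (hθ₂.le_of_le hθ₁.le_left hb₁)

/-- For Θ lub closed, if θ₁, θ₂ ∈ {θ} ⊔ Θ and θ₁ is the maximum of (θ₂]_Θ,
then θ₁ = θ₂. -/
theorem stmt10 (Θ : Set (X → Option V)) (hΘ : LubClosed Θ)
    (θ θ₁ θ₂ : X → Option V)
    (h₁ : θ₁ ∈ joinOne θ Θ) (h₂ : θ₂ ∈ joinOne θ Θ)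
    (hmem : θ₁ ∈ below θ₂ Θ) (hmax : ∀ q ∈ below θ₂ Θ, PFle q θ₁) :
    θ₁ = θ₂ :=
  stmt10_general Θ θ θ₁ θ₂ h₁ h₂ hmem hmax
end

section
/- If Θ is a finite set of partial functions from X to V, then its lub closure Θ̄ is also finite. -/
/-! A lub of lubs of subsets of `Θ` is the lub of their union, again a subset of `Θ`. Hence the
lubs of subsets of `Θ` form a lub closed set containing `Θ`, so it contains `lubClosure Θ`; and
since lubs are unique, there are at most `2 ^ |Θ|` of them. -/

/- Partial functions X ⇀ V are modeled as functions `X → Option V`. -/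

variable {X V E : Type*}

/-- The lub closure of Θ: the intersection of all lub closed sets including Θ. -/
def lubClosure (Θ : Set (X → Option V)) : Set (X → Option V) :=
  ⋂₀ {Θ' | Θ ⊆ Θ' ∧ LubClosed Θ'}

theorem IsLubPF.unique {Θ : Set (X → Option V)} {u u' : X → Option V}
    (hu : IsLubPF Θ u) (hu' : IsLubPF Θ u') : u = u' :=
  (hu.2 u' hu'.1).antisymm (hu'.2 u hu.1)

theorem isLubPF_singleton (θ : X → Option V) : IsLubPF {θ} θ :=
  ⟨fun _ h => h ▸ PFle.refl _, fun _ hub => hub θ rfl⟩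

theorem IsLubPF.biUnion {S : Set (X → Option V)} {T : (X → Option V) → Set (X → Option V)}
    (hT : ∀ s ∈ S, IsLubPF (T s) s) {u : X → Option V} (hu : IsLubPF S u) :
    IsLubPF (⋃ s ∈ S, T s) u := by
  refine ⟨?_, fun w hw => hu.2 w fun s hs => (hT s hs).2 w fun θ hθ => ?_⟩
  · simp only [IsUB, Set.mem_iUnion]
    rintro θ ⟨s, hs, hθ⟩ x v hxv
    exact hu.1 s hs x v ((hT s hs).1 θ hθ x v hxv)
  · exact hw θ (Set.mem_biUnion hs hθ)

def lubsOfSubsets (Θ : Set (X → Option V)) : Set (X → Option V) :=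
  {u | ∃ Θ' ⊆ Θ, IsLubPF Θ' u}

theorem subset_lubsOfSubsets (Θ : Set (X → Option V)) : Θ ⊆ lubsOfSubsets Θ :=
  fun θ hθ => ⟨{θ}, Set.singleton_subset_iff.2 hθ, isLubPF_singleton θ⟩

theorem lubClosed_lubsOfSubsets (Θ : Set (X → Option V)) : LubClosed (lubsOfSubsets Θ) := by
  intro S hS u hu
  choose! T hTΘ hT using fun s hs => (hS hs : ∃ Θ' ⊆ Θ, IsLubPF Θ' s)
  exact ⟨⋃ s ∈ S, T s, Set.iUnion₂_subset hTΘ, hu.biUnion hT⟩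

theorem lubsOfSubsets_finite {Θ : Set (X → Option V)} (hΘ : Θ.Finite) :
    (lubsOfSubsets Θ).Finite := by
  have hcover : lubsOfSubsets Θ ⊆ ⋃ Θ' ∈ 𝒫 Θ, {u | IsLubPF Θ' u} := by
    rintro u ⟨Θ', hΘ', hu⟩
    exact Set.mem_biUnion hΘ' hu
  refine (hΘ.finite_subsets.biUnion fun Θ' _ => ?_).subset hcover
  exact Set.Subsingleton.finite fun _ hu _ hu' => hu.unique hu'

theorem lubClosure_subset {Θ Θ' : Set (X → Option V)} (hΘ : Θ ⊆ Θ') (hΘ' : LubClosed Θ') :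
    lubClosure Θ ⊆ Θ' :=
  Set.sInter_subset_of_mem ⟨hΘ, hΘ'⟩

/-- The lub closure of a finite set of partial functions is finite. -/
theorem stmt13 (Θ : Set (X → Option V)) (hΘ : Θ.Finite) :
    (lubClosure Θ).Finite :=
  (lubsOfSubsets_finite hΘ).subset
    (lubClosure_subset (subset_lubsOfSubsets Θ) (lubClosed_lubsOfSubsets Θ))
end

section
/- For any parametric trace τ (a finite list of parametric events), the set Θ_τ is a finite lub closed set of partial functions from X to V. -/
/- Partial functions X ⇀ V are modeled as functions `X → Option V`. -/

variable {X V E : Type*}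

/-- A parametric event is a pair e⟨θ⟩; a parametric trace is a finite list of
parametric events. Θ_τ is the lub closure of the parameter instances occurring in τ. -/
def ThetaOf (τ : List (E × (X → Option V))) : Set (X → Option V) :=
  lubClosure {θ | ∃ e : E, (e, θ) ∈ τ}

def lubsOf (S : Set (X → Option V)) : Set (X → Option V) :=
  {u | ∃ A ⊆ S, IsLubPF A u}

theorem subset_lubsOf (S : Set (X → Option V)) : S ⊆ lubsOf S :=
  fun θ hθ => ⟨{θ}, Set.singleton_subset_iff.mpr hθ, isLubPF_singleton θ⟩

theorem lubClosed_lubsOf (S : Set (X → Option V)) : LubClosed (lubsOf S) := by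
  intro Θ' hΘ' u hu
  refine ⟨{θ ∈ S | PFle θ u}, Set.sep_subset _ _, fun θ hθ => hθ.2, fun θ'' hθ'' => ?_⟩
  refine hu.2 θ'' fun v hv => ?_
  obtain ⟨A, hAS, hA⟩ := hΘ' hv
  exact hA.2 θ'' fun a ha => hθ'' a ⟨hAS ha, (hA.1 a ha).trans (hu.1 v hv)⟩

theorem finite_lubsOf {S : Set (X → Option V)} (hS : S.Finite) : (lubsOf S).Finite := by
  have hcover : lubsOf S = ⋃ A ∈ {A | A ⊆ S}, {u | IsLubPF A u} := by
    ext u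
    simp [lubsOf]
  rw [hcover]
  exact hS.finite_subsets.biUnion fun A _ =>
    Set.Subsingleton.finite fun _ hu _ hu' => IsLubPF.unique hu hu'

theorem lubClosure_minimal {S T : Set (X → Option V)} (hST : S ⊆ T) (hT : LubClosed T) :
    lubClosure S ⊆ T :=
  Set.sInter_subset_of_mem ⟨hST, hT⟩

theorem lubClosed_lubClosure (S : Set (X → Option V)) : LubClosed (lubClosure S) := by
  intro Θ' hΘ' u hu T ⟨hST, hT⟩
  exact hT Θ' (hΘ'.trans (lubClosure_minimal hST hT)) u hu

theorem finite_lubClosure {S : Set (X → Option V)} (hS : S.Finite) :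
    (lubClosure S).Finite :=
  (finite_lubsOf hS).subset (lubClosure_minimal (subset_lubsOf S) (lubClosed_lubsOf S))

theorem finite_instances (τ : List (E × (X → Option V))) :
    {θ | ∃ e : E, (e, θ) ∈ τ}.Finite :=
  (List.finite_toSet (τ.map Prod.snd)).subset fun θ ⟨e, he⟩ =>
    List.mem_map.mpr ⟨(e, θ), he, rfl⟩

/-- For any parametric trace τ, the set Θ_τ is a finite lub closed set. -/
theorem stmt14 (τ : List (E × (X → Option V))) :
    (ThetaOf τ).Finite ∧ LubClosed (ThetaOf τ) :=
  ⟨finite_lubClosure (finite_instances τ), lubClosed_lubClosure _⟩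
end

section
/- If M = (S, E, C, i, σ, γ) is a monitor for the property P : E* → C, then the parametric monitor ΛX.M is a monitor for the parametric property ΛX.P; concretely, for every parametric trace τ and every parameter instance θ : X ⇀ V, (ΛX.σ)(λθ.i, τ)(θ) = σ(i, τ↾θ), and hence (ΛX.γ)((ΛX.σ)(λθ.i, τ))(θ) = P(τ↾θ) = (ΛX.P)(τ)(θ). -/
/- Partial functions X ⇀ V are modeled as functions `X → Option V`. -/

variable {X V E : Type*}

/-- The θ-trace traceSlice τ↾θ : keep (in order) the base events of τ whose parameter
instance is ⊑ θ, dropping the parameter instances. -/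
noncomputable def traceSlice (τ : List (E × (X → Option V))) (θ : X → Option V) :
    List E :=
  (τ.filter fun p => @decide (PFle p.2 θ) (Classical.propDecidable _)).map Prod.fst

/-- The transition function of a monitor extended to traces:
σ(s, ε) = s and σ(s, w e) = σ(σ(s, w), e). -/
def runMon {S : Type*} (σ : S → E → S) (s : S) (w : List E) : S :=
  w.foldl σ s

/- One transition of the parametric monitor ΛX.M on parametric event ev = e⟨θ'⟩:
(ΛX.σ)(δ, e⟨θ'⟩)(θ) = σ(δ(θ), e) if θ' ⊑ θ, and δ(θ) otherwise. -/
open Classical in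
noncomputable def pstep {S : Type*} (σ : S → E → S)
    (δ : (X → Option V) → S) (ev : E × (X → Option V)) :
    (X → Option V) → S :=
  fun θ => if PFle ev.2 θ then σ (δ θ) ev.1 else δ θ

/-- (ΛX.σ) extended to parametric traces. -/
noncomputable def pRun {S : Type*} (σ : S → E → S)
    (δ : (X → Option V) → S) (τ : List (E × (X → Option V))) :
    (X → Option V) → S :=
  τ.foldl (pstep σ) δ

theorem traceSlice_cons_of_PFle {ev : E × (X → Option V)} {θ : X → Option V}
    (h : PFle ev.2 θ) (τ : List (E × (X → Option V))) :
    traceSlice (ev :: τ) θ = ev.1 :: traceSlice τ θ := by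
  simp [traceSlice, h]

theorem traceSlice_cons_of_not_PFle {ev : E × (X → Option V)} {θ : X → Option V}
    (h : ¬PFle ev.2 θ) (τ : List (E × (X → Option V))) :
    traceSlice (ev :: τ) θ = traceSlice τ θ := by
  simp [traceSlice, h]

section ParametricMonitor

variable {S : Type*} (σ : S → E → S)

theorem runMon_cons (s : S) (e : E) (w : List E) :
    runMon σ s (e :: w) = runMon σ (σ s e) w := rfl

theorem pRun_cons (δ : (X → Option V) → S) (ev : E × (X → Option V))
    (τ : List (E × (X → Option V))) :
    pRun σ δ (ev :: τ) = pRun σ (pstep σ δ ev) τ := rfl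

theorem pRun_apply (τ : List (E × (X → Option V))) (δ : (X → Option V) → S)
    (θ : X → Option V) :
    pRun σ δ τ θ = runMon σ (δ θ) (traceSlice τ θ) := by
  induction τ generalizing δ with
  | nil => rfl
  | cons ev τ ih =>
    rw [pRun_cons, ih]
    by_cases h : PFle ev.2 θ
    · rw [traceSlice_cons_of_PFle h, runMon_cons, pstep, if_pos h]
    · rw [traceSlice_cons_of_not_PFle h, pstep, if_neg h]

end ParametricMonitor

/-- If M = (S, E, C, i, σ, γ) is a monitor for P : E* → C, then the parametric
monitor ΛX.M is a monitor for the parametric property ΛX.P: for every parametric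
trace τ and parameter instance θ,
(ΛX.σ)(λθ.i, τ)(θ) = σ(i, τ↾θ) and (ΛX.γ)((ΛX.σ)(λθ.i, τ))(θ) = P(τ↾θ). -/
theorem stmt18 {S C : Type*} (i : S) (σ : S → E → S) (γ : S → C)
    (P : List E → C) (hM : ∀ w : List E, γ (runMon σ i w) = P w)
    (τ : List (E × (X → Option V))) (θ : X → Option V) :
    pRun σ (fun _ => i) τ θ = runMon σ i (traceSlice τ θ) ∧
    γ (pRun σ (fun _ => i) τ θ) = P (traceSlice τ θ) := by
  have hslice := pRun_apply σ τ (fun _ => i) θ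
  exact ⟨hslice, by rw [hslice, hM]⟩
end
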